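/- arXiv:1110.3392 — 2 statements merged into one kernel-verified Lean document; each statement's English description precedes it below -/
import Mathlib

section
/- Define the mean field F(θ) for θ = (ω, φ) by F(θ) = [ (Z_i(ω_i)/Z(ω) − 1/κ)_{i=1..κ}, (Σ_{u∈U} Z_u(ω_u)/Z(ω)) (μ_{g,U}(ω) − φ) ], where Z_i(ω_i) = e^{-ω_i} ∫_{X_i} p, Z(ω) = Σ_i Z_i(ω_i), and μ_{g,U}(ω) = E_{p_ω}[g(X) | X ∈ X_U]. Then F(θ) = 0 if and only if there exists β ∈ ℝ such that ω_i = log Z_i(0) + β for all i and φ = μ_{g,U}(ω). -/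
open MeasureTheory

/-- The mean field `F(θ)` vanishes if and only if `ω` equals
`ω* = (log Z_i(0))_i` up to translation by a scalar `β` and `φ = μ_{g,U}(ω)`. -/
theorem stmt6 {X : Type*} [MeasurableSpace X] (μ : Measure X) [IsFiniteMeasure μ]
    {E : Type*} [NormedAddCommGroup E] [NormedSpace ℝ E] [CompleteSpace E]
    (κ : ℕ) (hκ : 0 < κ) (Xs : Fin κ → Set X) (hmeas : ∀ i, MeasurableSet (Xs i))
    (hdisj : Pairwise (Function.onFun Disjoint Xs))
    (hcover : (⋃ i, Xs i) = Set.univ)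
    (p : X → ℝ) (hp : ∀ x, 0 < p x) (hint : Integrable p μ)
    (hpos : ∀ i, 0 < ∫ x in Xs i, p x ∂μ)
    (U : Finset (Fin κ)) (hU : U.Nonempty)
    (g : X → E) (hg : ∃ B, ∀ x, ‖g x‖ ≤ B)
    (Zi : (Fin κ → ℝ) → Fin κ → ℝ)
    (hZi : ∀ ω i, Zi ω i = Real.exp (-(ω i)) * ∫ x in Xs i, p x ∂μ)
    (Z : (Fin κ → ℝ) → ℝ) (hZ : ∀ ω, Z ω = ∑ i, Zi ω i)
    (pω : (Fin κ → ℝ) → X → ℝ)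
    (hpω : ∀ ω x, pω ω x = (∑ i, Real.exp (-(ω i)) * Set.indicator (Xs i) p x) / Z ω)
    (XU : Set X) (hXU : XU = ⋃ u ∈ U, Xs u)
    (μgU : (Fin κ → ℝ) → E)
    (hμgU : ∀ ω, μgU ω = (∫ x in XU, pω ω x ∂μ)⁻¹ • ∫ x in XU, pω ω x • g x ∂μ)
    (ω : Fin κ → ℝ) (φ : E) :
    ((∀ i, Zi ω i / Z ω - 1 / κ = 0) ∧
        ((∑ u ∈ U, Zi ω u) / Z ω) • (μgU ω - φ) = 0) ↔
      ∃ β : ℝ, (∀ i, ω i = Real.log (∫ x in Xs i, p x ∂μ) + β) ∧ φ = μgU ω := by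
  have hZip : ∀ i, 0 < Zi ω i := fun i => by
    rw [hZi]; exact mul_pos (Real.exp_pos _) (hpos i)
  haveI : Nonempty (Fin κ) := Fin.pos_iff_nonempty.mp hκ
  have hZp : 0 < Z ω := by
    rw [hZ]; exact Finset.sum_pos (fun i _ => hZip i) Finset.univ_nonempty
  have hκR : (0 : ℝ) < (κ : ℝ) := by exact_mod_cast hκ
  constructor
  · rintro ⟨h1, h2⟩
    have hSU : 0 < ∑ u ∈ U, Zi ω u := Finset.sum_pos (fun i _ => hZip i) hU
    have hc : (∑ u ∈ U, Zi ω u) / Z ω ≠ 0 := ne_of_gt (div_pos hSU hZp)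
    have hφ : φ = μgU ω := by
      rcases smul_eq_zero.mp h2 with h | h
      · exact absurd h hc
      · exact (sub_eq_zero.mp h).symm
    refine ⟨Real.log κ - Real.log (Z ω), fun i => ?_, hφ⟩
    have h1i : Zi ω i / Z ω = 1 / κ := sub_eq_zero.mp (h1 i)
    have hZiv : Zi ω i = Z ω / κ := by
      field_simp at h1i ⊢
      linarith [h1i]
    have hlog : Real.log (Zi ω i) = Real.log (Z ω) - Real.log κ := by
      rw [hZiv, Real.log_div hZp.ne' hκR.ne']
    rw [hZi, Real.log_mul (Real.exp_pos _).ne' (hpos i).ne', Real.log_exp] at hlog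
    linarith
  · rintro ⟨β, hω, hφ⟩
    have hZie : ∀ i, Zi ω i = Real.exp (-β) := fun i => by
      rw [hZi, hω i, neg_add, Real.exp_add, Real.exp_neg, Real.exp_log (hpos i)]
      rw [mul_comm, ← mul_assoc, mul_inv_cancel₀ (hpos i).ne']
      ring
    have hZe : Z ω = κ * Real.exp (-β) := by
      rw [hZ]
      simp [hZie, Finset.sum_const, Finset.card_univ]
    constructor
    · intro i
      rw [hZie i, hZe]
      rw [sub_eq_zero, div_eq_div_iff (by positivity) hκR.ne']
      ring
    · rw [← hφ, sub_self, smul_zero]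
end

section
/- Under the setup of the Lyapunov function L above, if Z_i(ω_i) ≥ ε > 0 for all i on the parameter set Θ and sup_ω |∂μ_{g,U}(ω)/∂ω_u| ≤ B < ∞, then for c_4 sufficiently large (depending on ε, B, κ), ⟨∇L(θ), F(θ)⟩ ≤ 0 for all θ ∈ Θ, with equality if and only if Z_i(ω_i) = Z̄(ω) for all i and φ = μ_{g,U}(ω). -/
open scoped RealInnerProductSpace

set_option maxHeartbeats 1000000 in
/-- By the gradient identity `⟨∇L(θ),F(θ)⟩ = −G(θ)/Z(ω)` with
`G(θ) = Σ_i c₄Z_i(Z_i−Z̄)² + ⟨Δφ, Σ_{u∈U}ΔZ_u ∂μ/∂ω_u⟩ + Σ_{u∈U}Z_u‖Δφ‖²`: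
if `Z_i(ω_i) ≥ ε > 0` on `Θ` and the partial derivatives of `μ_{g,U}` are
bounded by `B`, then for `c₄` sufficiently large, `⟨∇L(θ),F(θ)⟩ ≤ 0` on `Θ`,
with equality iff `Z_i = Z̄` for all `i` and `φ = μ_{g,U}(ω)`. -/
theorem stmt9 (κ d : ℕ) (hκ : 0 < κ)
    (c : Fin κ → ℝ) (hc : ∀ i, 0 < c i)
    (Zi : (Fin κ → ℝ) → Fin κ → ℝ)
    (hZi : ∀ ω i, Zi ω i = Real.exp (-(ω i)) * c i)
    (Z : (Fin κ → ℝ) → ℝ) (hZ : ∀ ω, Z ω = ∑ i, Zi ω i)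
    (Zbar : (Fin κ → ℝ) → ℝ) (hZbar : ∀ ω, Zbar ω = Z ω / κ)
    (U : Finset (Fin κ)) (hU : U.Nonempty)
    (m : (Fin κ → ℝ) → EuclideanSpace ℝ (Fin d))
    (Dm : (Fin κ → ℝ) → Fin κ → EuclideanSpace ℝ (Fin d))
    (hDm : ∀ ω u, HasDerivAt (fun t => m (Function.update ω u t)) (Dm ω u) (ω u))
    (Θ : Set ((Fin κ → ℝ) × EuclideanSpace ℝ (Fin d)))
    (ε B : ℝ) (hε : 0 < ε) (hB : 0 ≤ B)
    (hZε : ∀ θ ∈ Θ, ∀ i, ε ≤ Zi θ.1 i)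
    (hDmB : ∀ θ ∈ Θ, ∀ u, ‖Dm θ.1 u‖ ≤ B) :
    ∃ C : ℝ, ∀ c4 ≥ C, ∀ θ ∈ Θ,
      -(∑ i, c4 * Zi θ.1 i * (Zi θ.1 i - Zbar θ.1) ^ 2 +
          ⟪θ.2 - m θ.1, ∑ u ∈ U, (Zi θ.1 u - Zbar θ.1) • Dm θ.1 u⟫ +
          (∑ u ∈ U, Zi θ.1 u) * ‖θ.2 - m θ.1‖ ^ 2) / Z θ.1 ≤ 0 ∧
      (-(∑ i, c4 * Zi θ.1 i * (Zi θ.1 i - Zbar θ.1) ^ 2 +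
          ⟪θ.2 - m θ.1, ∑ u ∈ U, (Zi θ.1 u - Zbar θ.1) • Dm θ.1 u⟫ +
          (∑ u ∈ U, Zi θ.1 u) * ‖θ.2 - m θ.1‖ ^ 2) / Z θ.1 = 0 ↔
        (∀ i, Zi θ.1 i = Zbar θ.1) ∧ θ.2 = m θ.1) := by
  refine ⟨B ^ 2 / (2 * ε ^ 2) + 1, fun c4 hc4 θ hθ => ?_⟩
  have hc40 : (0:ℝ) ≤ c4 := le_trans (by positivity) hc4
  have hc4' : B ^ 2 / (2 * ε) + ε ≤ c4 * ε := by
    have h1 : (B ^ 2 / (2 * ε ^ 2) + 1) * ε ≤ c4 * ε :=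
      mul_le_mul_of_nonneg_right hc4 hε.le
    have h2 : (B ^ 2 / (2 * ε ^ 2) + 1) * ε = B ^ 2 / (2 * ε) + ε := by
      field_simp
    linarith [h2 ▸ h1]
  set a : ℝ := ‖θ.2 - m θ.1‖ with ha
  clear_value a
  have ha0 : 0 ≤ a := ha ▸ norm_nonneg _
  have hZpos : 0 < Z θ.1 := by
    rw [hZ]
    have h0 : (0:ℝ) < ∑ _i : Fin κ, ε := by
      rw [Finset.sum_const, Finset.card_univ, Fintype.card_fin, nsmul_eq_mul]
      positivity
    exact lt_of_lt_of_le h0 (Finset.sum_le_sum fun i _ => hZε θ hθ i)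
  have hcross : ⟪θ.2 - m θ.1, ∑ u ∈ U, (Zi θ.1 u - Zbar θ.1) • Dm θ.1 u⟫ =
      ∑ u ∈ U, (Zi θ.1 u - Zbar θ.1) * ⟪θ.2 - m θ.1, Dm θ.1 u⟫ := by
    rw [inner_sum]
    exact Finset.sum_congr rfl fun u _ => real_inner_smul_right _ _ _
  -- per-term bound on the cross term
  have hcb : ∀ u ∈ U, -(ε / 2 * a ^ 2 + B ^ 2 / (2 * ε) * (Zi θ.1 u - Zbar θ.1) ^ 2)
      ≤ (Zi θ.1 u - Zbar θ.1) * ⟪θ.2 - m θ.1, Dm θ.1 u⟫ := by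
    intro u _
    set zu := Zi θ.1 u - Zbar θ.1 with hzu
    clear_value zu
    have h1 : |⟪θ.2 - m θ.1, Dm θ.1 u⟫| ≤ a * B := by
      calc |⟪θ.2 - m θ.1, Dm θ.1 u⟫| ≤ ‖θ.2 - m θ.1‖ * ‖Dm θ.1 u‖ :=
            abs_real_inner_le_norm _ _
        _ ≤ a * B := by rw [← ha]; exact mul_le_mul_of_nonneg_left (hDmB θ hθ u) (ha ▸ ha0)
    have h2 : -(|zu| * (a * B)) ≤ zu * ⟪θ.2 - m θ.1, Dm θ.1 u⟫ := by
      calc -(|zu| * (a * B)) ≤ -(|zu| * |⟪θ.2 - m θ.1, Dm θ.1 u⟫|) :=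
            neg_le_neg (mul_le_mul_of_nonneg_left h1 (abs_nonneg _))
        _ = -|zu * ⟪θ.2 - m θ.1, Dm θ.1 u⟫| := by rw [abs_mul]
        _ ≤ _ := neg_abs_le _
    have e1 : B ^ 2 * zu ^ 2 = (B * |zu|) ^ 2 := by rw [mul_pow, sq_abs]
    have h3 : ε / 2 * a ^ 2 + B ^ 2 / (2 * ε) * zu ^ 2
        = (ε ^ 2 * a ^ 2 + B ^ 2 * zu ^ 2) / (2 * ε) := by field_simp
    have h4 : |zu| * (a * B) ≤ ε / 2 * a ^ 2 + B ^ 2 / (2 * ε) * zu ^ 2 := by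
      rw [h3, le_div_iff₀ (by positivity : (0:ℝ) < 2 * ε)]
      nlinarith [sq_nonneg (ε * a - B * |zu|), e1]
    linarith
  have hcross_ge : -((U.card : ℝ) * (ε / 2) * a ^ 2 +
        B ^ 2 / (2 * ε) * ∑ u ∈ U, (Zi θ.1 u - Zbar θ.1) ^ 2)
      ≤ ⟪θ.2 - m θ.1, ∑ u ∈ U, (Zi θ.1 u - Zbar θ.1) • Dm θ.1 u⟫ := by
    rw [hcross]
    have h5 := Finset.sum_le_sum hcb
    rw [Finset.sum_neg_distrib, Finset.sum_add_distrib, Finset.sum_const,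
      nsmul_eq_mul, ← Finset.mul_sum] at h5
    calc -((U.card : ℝ) * (ε / 2) * a ^ 2 +
          B ^ 2 / (2 * ε) * ∑ u ∈ U, (Zi θ.1 u - Zbar θ.1) ^ 2)
        = -(↑U.card * (ε / 2 * a ^ 2) +
          B ^ 2 / (2 * ε) * ∑ u ∈ U, (Zi θ.1 u - Zbar θ.1) ^ 2) := by ring
      _ ≤ _ := h5
  have hfirst : B ^ 2 / (2 * ε) * (∑ i, (Zi θ.1 i - Zbar θ.1) ^ 2) +
        ε * (∑ i, (Zi θ.1 i - Zbar θ.1) ^ 2)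
      ≤ ∑ i, c4 * Zi θ.1 i * (Zi θ.1 i - Zbar θ.1) ^ 2 := by
    have h6 : ∑ i, (B ^ 2 / (2 * ε) + ε) * (Zi θ.1 i - Zbar θ.1) ^ 2
        ≤ ∑ i, c4 * Zi θ.1 i * (Zi θ.1 i - Zbar θ.1) ^ 2 := by
      apply Finset.sum_le_sum
      intro i _
      apply mul_le_mul_of_nonneg_right _ (sq_nonneg _)
      have h7 : c4 * ε ≤ c4 * Zi θ.1 i :=
        mul_le_mul_of_nonneg_left (hZε θ hθ i) hc40
      linarith
    calc B ^ 2 / (2 * ε) * (∑ i, (Zi θ.1 i - Zbar θ.1) ^ 2) +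
          ε * (∑ i, (Zi θ.1 i - Zbar θ.1) ^ 2)
        = ∑ i, (B ^ 2 / (2 * ε) + ε) * (Zi θ.1 i - Zbar θ.1) ^ 2 := by
          rw [← Finset.mul_sum]; ring
      _ ≤ _ := h6
  have hthird : (U.card : ℝ) * ε * a ^ 2 ≤ (∑ u ∈ U, Zi θ.1 u) * a ^ 2 := by
    apply mul_le_mul_of_nonneg_right _ (sq_nonneg _)
    calc (U.card : ℝ) * ε = ∑ _u ∈ U, ε := by rw [Finset.sum_const, nsmul_eq_mul]
      _ ≤ _ := Finset.sum_le_sum fun u _ => hZε θ hθ u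
  have hUsub : ∑ u ∈ U, (Zi θ.1 u - Zbar θ.1) ^ 2 ≤ ∑ i, (Zi θ.1 i - Zbar θ.1) ^ 2 :=
    Finset.sum_le_sum_of_subset_of_nonneg (Finset.subset_univ U)
      (fun i _ _ => sq_nonneg _)
  have hcard1 : (1:ℝ) ≤ U.card := by
    exact_mod_cast Nat.one_le_iff_ne_zero.mpr (Finset.card_ne_zero_of_mem hU.choose_spec)
  have hB2 : (0:ℝ) ≤ B ^ 2 / (2 * ε) := by positivity
  have hUsub' : B ^ 2 / (2 * ε) * (∑ u ∈ U, (Zi θ.1 u - Zbar θ.1) ^ 2)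
      ≤ B ^ 2 / (2 * ε) * ∑ i, (Zi θ.1 i - Zbar θ.1) ^ 2 :=
    mul_le_mul_of_nonneg_left hUsub hB2
  -- main lower bound on G
  have hsq : 0 ≤ ∑ i, (Zi θ.1 i - Zbar θ.1) ^ 2 := Finset.sum_nonneg fun i _ => sq_nonneg _
  have hG : ε * (∑ i, (Zi θ.1 i - Zbar θ.1) ^ 2) + (U.card : ℝ) * (ε / 2) * a ^ 2 ≤
      ∑ i, c4 * Zi θ.1 i * (Zi θ.1 i - Zbar θ.1) ^ 2 +
        ⟪θ.2 - m θ.1, ∑ u ∈ U, (Zi θ.1 u - Zbar θ.1) • Dm θ.1 u⟫ +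
        (∑ u ∈ U, Zi θ.1 u) * a ^ 2 := by
    nlinarith [hfirst, hcross_ge, hthird, hUsub']
  have hG0 : 0 ≤ ∑ i, c4 * Zi θ.1 i * (Zi θ.1 i - Zbar θ.1) ^ 2 +
        ⟪θ.2 - m θ.1, ∑ u ∈ U, (Zi θ.1 u - Zbar θ.1) • Dm θ.1 u⟫ +
        (∑ u ∈ U, Zi θ.1 u) * a ^ 2 := by
    have t1 : (0:ℝ) ≤ ε * ∑ i, (Zi θ.1 i - Zbar θ.1) ^ 2 := mul_nonneg hε.le hsq
    have t2 : (0:ℝ) ≤ (U.card : ℝ) * (ε / 2) * a ^ 2 :=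
      mul_nonneg (mul_nonneg (le_trans zero_le_one hcard1) (by positivity)) (sq_nonneg a)
    linarith [hG]
  constructor
  · rw [neg_div]
    simp only [neg_nonpos]
    exact div_nonneg hG0 hZpos.le
  · rw [neg_div, neg_eq_zero, div_eq_zero_iff]
    constructor
    · rintro (hG0' | hZ0)
      · -- G = 0 forces everything zero
        have t2 : (0:ℝ) ≤ (U.card : ℝ) * (ε / 2) * a ^ 2 :=
          mul_nonneg (mul_nonneg (le_trans zero_le_one hcard1) (by positivity)) (sq_nonneg a)
        have t1 : (0:ℝ) ≤ ε * ∑ i, (Zi θ.1 i - Zbar θ.1) ^ 2 := mul_nonneg hε.le hsq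
        have hsum0 : ∑ i, (Zi θ.1 i - Zbar θ.1) ^ 2 = 0 := by
          by_contra h
          have hSpos : 0 < ∑ i, (Zi θ.1 i - Zbar θ.1) ^ 2 := lt_of_le_of_ne hsq (Ne.symm h)
          have := mul_pos hε hSpos
          linarith [hG]
        have ha00 : a = 0 := by
          by_contra h
          have hapos : 0 < a := lt_of_le_of_ne ha0 (Ne.symm h)
          have hcpos : (0:ℝ) < (U.card : ℝ) * (ε / 2) * a ^ 2 :=
            mul_pos (mul_pos (lt_of_lt_of_le zero_lt_one hcard1) (half_pos hε)) (pow_pos hapos 2)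
          linarith [hG]
        refine ⟨fun i => ?_, ?_⟩
        · have h8 := (Finset.sum_eq_zero_iff_of_nonneg
            (fun i _ => sq_nonneg (Zi θ.1 i - Zbar θ.1))).mp hsum0 i (Finset.mem_univ i)
          have h9 : Zi θ.1 i - Zbar θ.1 = 0 := sq_eq_zero_iff.mp h8
          linarith
        · have h10 : θ.2 - m θ.1 = 0 := norm_eq_zero.mp (ha ▸ ha00)
          exact sub_eq_zero.mp h10
      · exact absurd hZ0 hZpos.ne'
    · rintro ⟨hzz, hphi⟩
      left
      have h1 : ∀ i : Fin κ, Zi θ.1 i - Zbar θ.1 = 0 := fun i => sub_eq_zero.mpr (hzz i)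
      have h2 : θ.2 - m θ.1 = 0 := sub_eq_zero.mpr hphi
      have ha00 : a = 0 := by rw [ha, h2, norm_zero]
      rw [h2]
      simp [h1, ha00]
end
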